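/- Let A be a strongly connected finite automaton whose minimal transition ideal I(A) is a right group. Then the relation π on S defined by s π t iff δ(s,x) = δ(t,x) for all [x]_A ∈ I(A) is an automaton congruence, and the quotient automaton A/π is a permutation strongly connected automaton. -/

import Mathlib

/-- Extended transition function of an automaton: the action of a word on a state. -/
def run {S Alph : Type*} (δ : S → Alph → S) (s : S) (x : List Alph) : S :=
  x.foldl δ s

/-- Single-letter transition of the direct product automaton. -/
def prodStep {S T Alph : Type*} (δ : S → Alph → S) (γ : T → Alph → T) :
    S × T → Alph → S × T :=
  fun p a => (δ p.1 a, γ p.2 a)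

/-- An automaton is strongly connected if every state reaches every state. -/
def StronglyConnected {S Alph : Type*} (δ : S → Alph → S) : Prop :=
  ∀ s t : S, ∃ x : List Alph, run δ s x = t

/-- A word is a reset input function if it sends every state to one fixed state. -/
def IsReset {S Alph : Type*} (δ : S → Alph → S) (x : List Alph) : Prop :=
  ∃ t : S, ∀ s : S, run δ s x = t

/-- A synchronizing automaton has at least one reset input function. -/
def Synchronizing {S Alph : Type*} (δ : S → Alph → S) : Prop :=
  ∃ x : List Alph, IsReset δ x

/-- A permutation automaton: every input word acts bijectively on the states. -/
def PermutationAut {S Alph : Type*} (δ : S → Alph → S) : Prop :=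
  ∀ x : List Alph, Function.Bijective (fun s : S => run δ s x)

/-- The range `Im_A(x)` of the input function given by the word `x`. -/
def Im {S Alph : Type*} (δ : S → Alph → S) (x : List Alph) : Set S :=
  Set.range fun s : S => run δ s x

/-- The rank of a word: cardinality of its range. -/
noncomputable def wordRank {S Alph : Type*} (δ : S → Alph → S) (x : List Alph) : ℕ :=
  (Im δ x).ncard

/-- `[x]_A` lies in the minimal ideal `I(A)` of the transition semigroup:
`x` is a nonempty word of minimal rank among nonempty words. -/
def InMinIdeal {S Alph : Type*} (δ : S → Alph → S) (x : List Alph) : Prop :=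
  x ≠ [] ∧ ∀ y : List Alph, y ≠ [] → wordRank δ x ≤ wordRank δ y

/-- `x ≡_A y` : the words `x` and `y` act equally on every state. -/
def ActEq {S Alph : Type*} (δ : S → Alph → S) (x y : List Alph) : Prop :=
  ∀ s : S, run δ s x = run δ s y

/-- `[e]_A` is an idempotent element of the minimal ideal `I(A)`. -/
def IdemMin {S Alph : Type*} (δ : S → Alph → S) (e : List Alph) : Prop :=
  InMinIdeal δ e ∧ ActEq δ (e ++ e) e

/-- The minimal ideal `I(A)` is right simple: for all `a, b ∈ I(A)` there is
`c ∈ I(A)` with `ac = b`. -/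
def RightSimpleMin {S Alph : Type*} (δ : S → Alph → S) : Prop :=
  ∀ a b : List Alph, InMinIdeal δ a → InMinIdeal δ b →
    ∃ c : List Alph, InMinIdeal δ c ∧ ActEq δ (a ++ c) b

/-- The minimal ideal `I(A)` is a right group: right simple with an idempotent. -/
def RightGroupMin {S Alph : Type*} (δ : S → Alph → S) : Prop :=
  RightSimpleMin δ ∧ ∃ e : List Alph, IdemMin δ e

/-- The ranges of the idempotents of `I(A)` form a partition of the state set. -/
def IdemPartition {S Alph : Type*} (δ : S → Alph → S) : Prop :=
  (∀ s : S, ∃ e : List Alph, IdemMin δ e ∧ s ∈ Im δ e) ∧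
  ∀ e f : List Alph, IdemMin δ e → IdemMin δ f →
    Im δ e ∩ Im δ f = ∅ ∨ Im δ e = Im δ f

/-- A quasi-ideal automaton. -/
def QuasiIdeal {S Alph : Type*} (δ : S → Alph → S) : Prop :=
  StronglyConnected δ ∧ RightGroupMin δ ∧ IdemPartition δ

/-- An automaton congruence: an equivalence relation on states compatible with
the action of every word. -/
def AutCongruence {S Alph : Type*} (δ : S → Alph → S) (r : S → S → Prop) : Prop :=
  Equivalence r ∧ ∀ s t : S, r s t → ∀ z : List Alph, r (run δ s z) (run δ t z)

/-- The congruence `π` : `s π t` iff `sx = tx` for every `[x]_A ∈ I(A)`. -/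
def piRel {S Alph : Type*} (δ : S → Alph → S) (s t : S) : Prop :=
  ∀ x : List Alph, InMinIdeal δ x → run δ s x = run δ t x

/-- The congruence `ρ` : `s ρ t` iff `s, t ∈ Im_A(e)` for some `[e]_A ∈ E(A)`. -/
def rhoRel {S Alph : Type*} (δ : S → Alph → S) (s t : S) : Prop :=
  ∃ e : List Alph, IdemMin δ e ∧ s ∈ Im δ e ∧ t ∈ Im δ e

/-!
Right simplicity of `I(A)` makes `π` testable on a single word: if `a ∈ I(A)` then every
`b ∈ I(A)` acts as `a c` for some `c`, so `s π t` as soon as `s a = t a`. Since the words of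
`I(A)` have minimal rank and `Im (z a) ⊆ Im a`, the ranges of `z a` and `a` coincide. With
`z a ∈ I(A)` this makes every word `z` injective on `π`-classes, and with `Im (z a) = Im a`
surjective; strong connectivity passes to any quotient.
-/

section MinIdeal

variable {S Alph : Type*} (δ : S → Alph → S)

lemma run_append (s : S) (x y : List Alph) :
    run δ s (x ++ y) = run δ (run δ s x) y :=
  List.foldl_append ..

lemma Im_append_subset (z x : List Alph) : Im δ (z ++ x) ⊆ Im δ x := by
  rintro _ ⟨s, rfl⟩
  exact ⟨run δ s z, (run_append δ s z x).symm⟩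

variable {δ} [Finite S]

lemma InMinIdeal.append_left {x : List Alph} (hx : InMinIdeal δ x) (z : List Alph) :
    InMinIdeal δ (z ++ x) :=
  ⟨by simp [hx.1], fun y hy =>
    (Set.ncard_le_ncard (Im_append_subset δ z x) (Set.toFinite _)).trans (hx.2 y hy)⟩

lemma InMinIdeal.Im_append_left {x : List Alph} (hx : InMinIdeal δ x) (z : List Alph) :
    Im δ (z ++ x) = Im δ x :=
  Set.eq_of_subset_of_ncard_le (Im_append_subset δ z x)
    (hx.2 (z ++ x) (by simp [hx.1])) (Set.toFinite _)

end MinIdeal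

section PiRel

variable {S Alph : Type*} {δ : S → Alph → S}

lemma piRel_equivalence : Equivalence (piRel δ) :=
  ⟨fun _ _ _ => rfl, fun h x hx => (h x hx).symm, fun h h' x hx => (h x hx).trans (h' x hx)⟩

lemma autCongruence_piRel [Finite S] : AutCongruence δ (piRel δ) := by
  refine ⟨piRel_equivalence, fun s t h z x hx => ?_⟩
  rw [← run_append, ← run_append]
  exact h (z ++ x) (hx.append_left z)

lemma piRel_of_run_eq (hrs : RightSimpleMin δ) {a : List Alph} (ha : InMinIdeal δ a) {s t : S}
    (h : run δ s a = run δ t a) : piRel δ s t := by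
  intro b hb
  obtain ⟨c, -, hc⟩ := hrs a b ha hb
  rw [← hc s, ← hc t, run_append, run_append, h]

lemma piRel_of_piRel_run [Finite S] (hrs : RightSimpleMin δ) {z : List Alph} {s t : S}
    (h : piRel δ (run δ s z) (run δ t z)) : piRel δ s t := by
  intro x hx
  refine piRel_of_run_eq hrs (hx.append_left z) ?_ x hx
  rw [run_append, run_append]
  exact h x hx

lemma exists_piRel_run [Finite S] (hrs : RightSimpleMin δ) {a : List Alph}
    (ha : InMinIdeal δ a) (z : List Alph) (t : S) : ∃ s, piRel δ (run δ s z) t := by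
  obtain ⟨s, hs⟩ : run δ t a ∈ Im δ (z ++ a) := ha.Im_append_left z ▸ ⟨t, rfl⟩
  exact ⟨s, piRel_of_run_eq hrs ha (by rw [← run_append]; exact hs)⟩

end PiRel

/-- If `A` is strongly connected and `I(A)` is a right group, then `π` is an
automaton congruence and the quotient automaton `A/π` (whose states are the
`π`-classes, with every word acting classwise) is a permutation strongly
connected automaton: every word acts injectively and surjectively on the
classes, and every class reaches every class. -/
theorem stmt10 {S Alph : Type*} [Finite S] (δ : S → Alph → S)
    (hsc : StronglyConnected δ) (hrg : RightGroupMin δ) :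
    AutCongruence δ (piRel δ) ∧
    (∀ (z : List Alph) (s t : S), piRel δ (run δ s z) (run δ t z) → piRel δ s t) ∧
    (∀ (z : List Alph) (t : S), ∃ s : S, piRel δ (run δ s z) t) ∧
    (∀ s t : S, ∃ x : List Alph, piRel δ (run δ s x) t) := by
  obtain ⟨hrs, e, he⟩ := hrg
  refine ⟨autCongruence_piRel, fun z s t => piRel_of_piRel_run hrs, exists_piRel_run hrs he.1,
    fun s t => ?_⟩
  obtain ⟨x, rfl⟩ := hsc s t
  exact ⟨x, piRel_equivalence.refl _⟩
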